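/- Let $N$ be a Nijenhuis operator on a left-symmetric conformal algebra $A$. Then the product $a \cdot^N_\lambda b = N(a)_\lambda b + a_\lambda N(b) - N(a_\lambda b)$ makes $A$ into a left-symmetric conformal algebra, and $N$ is a homomorphism of left-symmetric conformal algebras from $(A, \cdot^N)$ to $(A, \cdot)$. -/

import Mathlib

/- Encoding conventions.
A `ℂ[∂]`-module is encoded as a complex vector space `A` together with an
endomorphism `D : Module.End ℂ A` (the action of `∂`).
A polynomial `Σ cₙ λⁿ ∈ A[λ]` is encoded by its coefficient family `ℕ →₀ A`,
and `ev l p` is its evaluation at `λ = l`.  Since `ℂ` is infinite, a polynomial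
identity in the formal variables `λ, μ, …` is equivalent to the corresponding
family of identities for all complex values of the variables, which is how all
axioms are stated below.
A `λ`-product `a ⊗ b ↦ a_λ b ∈ A[λ]` is encoded as `mul : A → A → (ℕ →₀ A)`
(the coefficients of `a_λ b`), its evaluation at `λ = l` being `ev l (mul a b)`.
`substNeg D p` is the result of substituting the variable of `p` by `-∂-λ`:
it is again a polynomial in `λ` with coefficients `ℕ →₀ A`, so that
`b_{-∂-λ} a` is encoded as `substNeg D (mul b a)` (as a polynomial in `λ`). -/

namespace LSCpaper

open Finsupp

variable {A M V : Type*} [AddCommGroup A] [Module ℂ A] [AddCommGroup M] [Module ℂ M]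
  [AddCommGroup V] [Module ℂ V]

/-- Evaluation of a polynomial with coefficients in `V` at a complex number. -/
noncomputable def ev (l : ℂ) (p : ℕ →₀ V) : V := p.sum fun n c => l ^ n • c

/-- Substitution of `-∂ - λ` for the variable of `p`; the result is the
coefficient family (in `λ`) of the resulting polynomial. -/
noncomputable def substNeg (D : Module.End ℂ A) (p : ℕ →₀ A) : ℕ →₀ A :=
  p.sum fun i c => ∑ k ∈ Finset.range (i + 1),
    Finsupp.single k ((((-1 : ℂ) ^ k * (i.choose k : ℂ))) • ((-D) ^ (i - k)) c)

/-- `ℂ`-bilinearity of a `λ`-product. -/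
def Bilin (f : A → M → ℕ →₀ V) : Prop :=
  (∀ a a' b, f (a + a') b = f a b + f a' b) ∧
  (∀ (r : ℂ) (a : A) (b : M), f (r • a) b = r • f a b) ∧
  (∀ a b b', f a (b + b') = f a b + f a b') ∧
  (∀ (r : ℂ) (a : A) (b : M), f a (r • b) = r • f a b)

/-- `A` with `∂`-action `D` and `λ`-product `mul` is a left-symmetric conformal
algebra. -/
structure IsLSC (D : Module.End ℂ A) (mul : A → A → ℕ →₀ A) : Prop where
  bilin : Bilin mul
  sesq1 : ∀ (l : ℂ) (a b : A), ev l (mul (D a) b) = (-l) • ev l (mul a b)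
  sesq2 : ∀ (l : ℂ) (a b : A), ev l (mul a (D b)) = D (ev l (mul a b)) + l • ev l (mul a b)
  lsym : ∀ (l m : ℂ) (a b c : A),
    ev (l + m) (mul (ev l (mul a b)) c) - ev l (mul a (ev m (mul b c))) =
      ev (l + m) (mul (ev m (mul b a)) c) - ev m (mul b (ev l (mul a c)))

/-- `A` with `∂`-action `D` and `λ`-bracket `br` is a Lie conformal algebra. -/
structure IsLieConf (D : Module.End ℂ A) (br : A → A → ℕ →₀ A) : Prop where
  bilin : Bilin br
  sesq1 : ∀ (l : ℂ) (a b : A), ev l (br (D a) b) = (-l) • ev l (br a b)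
  sesq2 : ∀ (l : ℂ) (a b : A), ev l (br a (D b)) = D (ev l (br a b)) + l • ev l (br a b)
  skew : ∀ (l : ℂ) (a b : A), ev l (br a b) = - ev l (substNeg D (br b a))
  jacobi : ∀ (l m : ℂ) (a b c : A),
    ev l (br a (ev m (br b c))) =
      ev (l + m) (br (ev l (br a b)) c) + ev m (br b (ev l (br a c)))

/-- The evaluated bracket `[a_λ b] = a_λ b - b_{-∂-λ} a` of the sub-adjacent
Lie conformal algebra. -/
noncomputable def brEv (D : Module.End ℂ A) (mul : A → A → ℕ →₀ A) (l : ℂ) (a b : A) : A :=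
  ev l (mul a b) - ev l (substNeg D (mul b a))

end LSCpaper

namespace LSCpaper

variable {A : Type*} [AddCommGroup A] [Module ℂ A]

/-- The deformed product `a ·^N_λ b = N(a)_λ b + a_λ N(b) - N(a_λ b)`
associated with a `ℂ[∂]`-module endomorphism `N`. -/
noncomputable def mulN (D : Module.End ℂ A) (N : A →ₗ[ℂ] A)
    (mul : A → A → ℕ →₀ A) (a b : A) : ℕ →₀ A :=
  mul (N a) b + mul a (N b) - Finsupp.mapRange (⇑N) (map_zero N) (mul a b)

/-- `N` is a Nijenhuis operator on the left-symmetric conformal algebra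
`(A, D, mul)`: `N(a)_λ N(b) = N(a ·^N_λ b)`. -/
def IsNijenhuis (D : Module.End ℂ A) (N : A →ₗ[ℂ] A) (mul : A → A → ℕ →₀ A) : Prop :=
  ∀ (l : ℂ) (a b : A), ev l (mul (N a) (N b)) = N (ev l (mulN D N mul a b))

end LSCpaper

namespace LSCpaper

/-!
The deformed product inherits bilinearity and sesquilinearity because `N` commutes with `∂`.
For left-symmetry, consider the associator `(a_λ b)_{λ+μ} c - a_λ (b_μ c)`. By the Nijenhuis
condition, the associator of `·^N` is a combination of associators of the original product, with
`N` applied to some of `a, b, c` and to the result. The combination is symmetric in `a` and `b`,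
and left-symmetry makes each of its terms symmetric under `(λ, a) ↔ (μ, b)`.
-/

section Ev

variable {V W : Type*} [AddCommGroup V] [Module ℂ V] [AddCommGroup W] [Module ℂ W]

lemma ev_add (l : ℂ) (p q : ℕ →₀ V) : ev l (p + q) = ev l p + ev l q :=
  Finsupp.sum_add_index' (fun _ => smul_zero _) (fun _ _ _ => smul_add _ _ _)

lemma ev_smul (l r : ℂ) (p : ℕ →₀ V) : ev l (r • p) = r • ev l p := by
  rw [ev, Finsupp.sum_smul_index' (fun _ => smul_zero _), ev, Finsupp.smul_sum]
  exact Finsupp.sum_congr fun _ _ => smul_comm _ _ _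

lemma ev_sub (l : ℂ) (p q : ℕ →₀ V) : ev l (p - q) = ev l p - ev l q := by
  rw [sub_eq_add_neg, ev_add, ← neg_one_smul ℂ q, ev_smul, neg_one_smul, ← sub_eq_add_neg]

lemma ev_mapRange (l : ℂ) (f : V →ₗ[ℂ] W) (p : ℕ →₀ V) :
    ev l (Finsupp.mapRange f (map_zero f) p) = f (ev l p) := by
  rw [ev, Finsupp.sum_mapRange_index (fun _ => smul_zero _), ev, map_finsuppSum]
  exact Finsupp.sum_congr fun _ _ => (map_smul f _ _).symm

end Ev

section Bilin

variable {A M V : Type*} [AddCommGroup A] [Module ℂ A] [AddCommGroup M] [Module ℂ M]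
  [AddCommGroup V] [Module ℂ V] {f : A → M → ℕ →₀ V}

lemma Bilin.sub_left (hf : Bilin f) (a a' : A) (b : M) : f (a - a') b = f a b - f a' b := by
  rw [sub_eq_add_neg, hf.1, ← neg_one_smul ℂ a', hf.2.1, neg_one_smul, ← sub_eq_add_neg]

lemma Bilin.sub_right (hf : Bilin f) (a : A) (b b' : M) : f a (b - b') = f a b - f a b' := by
  rw [sub_eq_add_neg, hf.2.2.1, ← neg_one_smul ℂ b', hf.2.2.2, neg_one_smul, ← sub_eq_add_neg]

end Bilin

section Deformation

variable {A : Type*} [AddCommGroup A] [Module ℂ A]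
  (D : Module.End ℂ A) (N : A →ₗ[ℂ] A) {mul : A → A → ℕ →₀ A}

lemma ev_mulN (l : ℂ) (a b : A) :
    ev l (mulN D N mul a b) = ev l (mul (N a) b) + ev l (mul a (N b)) - N (ev l (mul a b)) := by
  rw [mulN, ev_sub, ev_add, ev_mapRange]

lemma Bilin.mulN (hmul : Bilin mul) : Bilin (mulN D N mul) := by
  obtain ⟨add_left, smul_left, add_right, smul_right⟩ := hmul
  have mapRange_smul (r : ℂ) (p : ℕ →₀ A) :=
    Finsupp.mapRange_smul (hf := map_zero N) r p (map_smul N r)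
  refine ⟨fun a a' b => ?_, fun r a b => ?_, fun a b b' => ?_, fun r a b => ?_⟩ <;>
    simp only [LSCpaper.mulN, map_add, map_smul, add_left, smul_left, add_right, smul_right,
      Finsupp.mapRange_add', mapRange_smul, smul_add, smul_sub] <;>
    abel

lemma mulN_sesq1 (hND : ∀ a, N (D a) = D (N a))
    (hsesq : ∀ (l : ℂ) (a b : A), ev l (mul (D a) b) = (-l) • ev l (mul a b)) (l : ℂ) (a b : A) :
    ev l (mulN D N mul (D a) b) = (-l) • ev l (mulN D N mul a b) := by
  simp only [ev_mulN, hND, hsesq, map_smul, smul_add, smul_sub]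

lemma mulN_sesq2 (hND : ∀ a, N (D a) = D (N a))
    (hsesq : ∀ (l : ℂ) (a b : A), ev l (mul a (D b)) = D (ev l (mul a b)) + l • ev l (mul a b))
    (l : ℂ) (a b : A) :
    ev l (mulN D N mul a (D b)) = D (ev l (mulN D N mul a b)) + l • ev l (mulN D N mul a b) := by
  simp only [ev_mulN, hND, hsesq, map_add, map_sub, map_smul, smul_add, smul_sub]
  abel

end Deformation

section Associator

variable {A : Type*} [AddCommGroup A] [Module ℂ A] {D : Module.End ℂ A} {mul : A → A → ℕ →₀ A}

noncomputable def assoc (mul : A → A → ℕ →₀ A) (l m : ℂ) (a b c : A) : A :=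
  ev (l + m) (mul (ev l (mul a b)) c) - ev l (mul a (ev m (mul b c)))

lemma IsLSC.assoc_comm (hA : IsLSC D mul) (l m : ℂ) (a b c : A) :
    assoc mul l m a b c = assoc mul m l b a c := by
  rw [assoc, assoc, add_comm m l]
  exact hA.lsym l m a b c

/-- Once every `N(x)_λ N(y)` is rewritten as `N(x ·^N_λ y)` by the Nijenhuis condition, both
sides are the same expression in the original product. -/
lemma assoc_mulN (N : A →ₗ[ℂ] A) (hmul : Bilin mul) (hN : IsNijenhuis D N mul)
    (l m : ℂ) (a b c : A) :
    assoc (mulN D N mul) l m a b c =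
      assoc mul l m (N a) (N b) c + assoc mul l m (N a) b (N c) + assoc mul l m a (N b) (N c)
        - N (assoc mul l m (N a) b c) - N (assoc mul l m a (N b) c) - N (assoc mul l m a b (N c))
        + N (N (assoc mul l m a b c)) := by
  simp only [assoc, ev_mulN, hN _ _ _, hmul.1, hmul.2.2.1, hmul.sub_left, hmul.sub_right,
    ev_add, ev_sub, map_add, map_sub]
  abel

lemma IsLSC.assoc_mulN_comm (hA : IsLSC D mul) {N : A →ₗ[ℂ] A} (hN : IsNijenhuis D N mul)
    (l m : ℂ) (a b c : A) :
    assoc (mulN D N mul) l m a b c = assoc (mulN D N mul) m l b a c := by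
  rw [assoc_mulN N hA.bilin hN, assoc_mulN N hA.bilin hN]
  simp only [hA.assoc_comm l m]
  abel

end Associator

/-- Let `N` be a Nijenhuis operator on a left-symmetric
conformal algebra `A`.  Then `a ·^N_λ b = N(a)_λ b + a_λ N(b) - N(a_λ b)`
makes `A` into a left-symmetric conformal algebra, and `N` is a homomorphism
of left-symmetric conformal algebras from `(A, ·^N)` to `(A, ·)`. -/
theorem nijenhuis_product {A : Type*} [AddCommGroup A] [Module ℂ A]
    (D : Module.End ℂ A) (N : A →ₗ[ℂ] A) (mul : A → A → ℕ →₀ A)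
    (hA : IsLSC D mul) (hND : ∀ a, N (D a) = D (N a))
    (hN : IsNijenhuis D N mul) :
    IsLSC D (mulN D N mul) ∧
      ∀ (l : ℂ) (a b : A), N (ev l (mulN D N mul a b)) = ev l (mul (N a) (N b)) := by
  refine ⟨⟨hA.bilin.mulN D N, mulN_sesq1 D N hND hA.sesq1, mulN_sesq2 D N hND hA.sesq2,
    fun l m a b c => ?_⟩, fun l a b => (hN l a b).symm⟩
  simpa only [assoc, add_comm m l] using hA.assoc_mulN_comm hN l m a b c

end LSCpaper
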